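/- Let U ⊆ ℝ^k be an open set, p ≥ 1, and for 1 ≤ i,j ≤ k let a_{ij} : (ℝ^k)^p → ℝ be smooth functions. Suppose u, v : U → ℝ^p are smooth maps such that for every l ∈ {1,…,p}, Σ_{i,j=1}^k (a_{ij}(∇u_1,…,∇u_p) / √(1+|∇u_l|²)) · D_{ij}u_l = 0 on U, and likewise Σ_{i,j=1}^k (a_{ij}(∇v_1,…,∇v_p) / √(1+|∇v_l|²)) · D_{ij}v_l = 0 on U. Then there exist smooth functions b_j^{m,l} : U → ℝ (1 ≤ j ≤ k, 1 ≤ m,l ≤ p) such that the difference φ = u − v satisfies, for each l ∈ {1,…,p}, the linear equation Σ_{i,j=1}^k (a_{ij}(∇u_1,…,∇u_p) / √(1+|∇u_l|²)) · D_{ij}φ_l + Σ_{m=1}^p Σ_{j=1}^k b_j^{m,l} · D_j φ_m = 0 on U. -/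

import Mathlib

/-!
Hadamard's lemma writes `A z - A w = C(z, w) (z - w)` with `C(z, w) = ∫₀¹ DA(w + t (z - w)) dt`
smooth in `(z, w)`. Subtracting the two equations for `u` and `v`,
`∑ A(∇u) D²u_l - ∑ A(∇v) D²v_l = ∑ A(∇u) D²φ_l + ∑ (A(∇u) - A(∇v)) D²v_l`, and applying the lemma
to `A_{ij}(z) = a_{ij}(z) / √(1 + |z_l|²)` turns the last sum into `∑ b_j^{m,l} D_j φ_m` with
`b_j^{m,l} = ∑_{ij} C_{ij}(∇u, ∇v)(e_{m,j}) D_{ij} v_l`.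
-/

/-- The `i`-th partial derivative of a function `f : ℝ^k → ℝ`. -/
noncomputable def pd {k : ℕ} (i : Fin k) (f : (Fin k → ℝ) → ℝ) : (Fin k → ℝ) → ℝ :=
  fun x => fderiv ℝ f x (Pi.single i 1)

/-- The gradient of a function `f : ℝ^k → ℝ` as a map into `ℝ^k`. -/
noncomputable def grad {k : ℕ} (f : (Fin k → ℝ) → ℝ) : (Fin k → ℝ) → (Fin k → ℝ) :=
  fun x i => pd i f x

open MeasureTheory Set
open scoped Convolution

theorem LinearMap.apply_eq_sum_sum_single {R M ι κ : Type*} [CommSemiring R] [AddCommMonoid M]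
    [Module R M] [Fintype ι] [DecidableEq ι] [Fintype κ] [DecidableEq κ]
    (L : (ι → κ → R) →ₗ[R] M) (h : ι → κ → R) :
    L h = ∑ m, ∑ j, h m j • L (Pi.single m (Pi.single j 1)) := by
  conv_lhs => rw [← Finset.univ_sum_single h]
  rw [map_sum]
  refine Finset.sum_congr rfl fun m _ => ?_
  simpa [← pi_eq_sum_univ'] using map_sum (L ∘ₗ LinearMap.single R (fun _ => κ → R) m)
    (fun j => h m j • Pi.single j 1) Finset.univ

/- Smoothness in the parameter comes from the theory of convolutions: with a cutoff `φ` equal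
to `1` on `[-1, 1]`, the integral is the convolution of the indicator of `(0, 1]` with
`φ • g q (-·)`, evaluated at `0`. -/
theorem contDiff_intervalIntegral_zero_one {P F : Type*} [NormedAddCommGroup P]
    [NormedSpace ℝ P] [NormedAddCommGroup F] [NormedSpace ℝ F] [CompleteSpace F] {n : ℕ∞}
    {g : P → ℝ → F} (hg : ContDiff ℝ n (Function.uncurry g)) :
    ContDiff ℝ n fun q => ∫ t in (0 : ℝ)..1, g q t := by
  let φ : ContDiffBump (0 : ℝ) := ⟨1, 2, one_pos, one_lt_two⟩
  let h : P → ℝ → F := fun q y => φ y • g q (-y)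
  have h_supp : ∀ q y, q ∈ (univ : Set P) → y ∉ Metric.closedBall (0 : ℝ) 2 → h q y = 0 := by
    intro q y _ hy
    have : φ y = 0 := φ.zero_of_le_dist (by simp at hy; simp [φ, hy.le])
    simp [h, this]
  have h_smooth : ContDiff ℝ n (Function.uncurry h) :=
    (φ.contDiff.comp contDiff_snd).smul (hg.comp (contDiff_fst.prodMk contDiff_snd.neg))
  have h_int : LocallyIntegrable ((Ioc (0 : ℝ) 1).indicator 1) volume :=
    (integrable_indicator_iff measurableSet_Ioc |>.2
      (integrableOn_const (C := (1 : ℝ)) measure_Ioc_lt_top.ne)).locallyIntegrable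
  have h_conv : ∀ q, ∫ t in (0 : ℝ)..1, g q t =
      ((Ioc (0 : ℝ) 1).indicator 1 ⋆[ContinuousLinearMap.lsmul ℝ ℝ, volume] h q) 0 := by
    intro q
    have hφ : ∀ t ∈ Ioc (0 : ℝ) 1, φ (-t) = 1 := fun t ht =>
      φ.one_of_mem_closedBall (by simp [φ, abs_of_pos ht.1, ht.2])
    rw [convolution_def, intervalIntegral.integral_of_le zero_le_one,
      ← integral_indicator measurableSet_Ioc]
    congr 1 with t
    by_cases ht : t ∈ Ioc (0 : ℝ) 1
    · simp [h, ht, hφ t ht]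
    · simp [ht]
  simp_rw [h_conv, ← contDiffOn_univ]
  exact contDiffOn_convolution_right_with_param_comp _ contDiffOn_const isOpen_univ
    (isCompact_closedBall 0 2) h_supp h_int h_smooth.contDiffOn

section Hadamard

variable {E G : Type*} [NormedAddCommGroup E] [NormedSpace ℝ E] [NormedAddCommGroup G]
  [NormedSpace ℝ G] [CompleteSpace G] {f : E → G}

noncomputable def hadamardCoeff (f : E → G) (z w : E) : E →L[ℝ] G :=
  ∫ t in (0 : ℝ)..1, fderiv ℝ f (w + t • (z - w))

theorem contDiff_hadamardCoeff {n : ℕ∞} (hf : ContDiff ℝ (n + 1) f) :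
    ContDiff ℝ n fun q : E × E => hadamardCoeff f q.1 q.2 :=
  contDiff_intervalIntegral_zero_one <| (hf.fderiv_right le_rfl).comp <|
    (contDiff_snd.comp contDiff_fst).add <|
      contDiff_snd.smul ((contDiff_fst.comp contDiff_fst).sub (contDiff_snd.comp contDiff_fst))

theorem sub_eq_hadamardCoeff_apply (hf : ContDiff ℝ 1 f) (z w : E) :
    f z - f w = hadamardCoeff f z w (z - w) := by
  have hγ : ∀ t : ℝ, HasDerivAt (fun s : ℝ => w + s • (z - w)) (z - w) t := fun t => by
    simpa using ((hasDerivAt_id t).smul_const (z - w)).const_add w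
  have hcont : Continuous fun t : ℝ => fderiv ℝ f (w + t • (z - w)) :=
    (hf.continuous_fderiv one_ne_zero).comp
      (continuous_const.add (continuous_id.smul continuous_const))
  rw [hadamardCoeff, ContinuousLinearMap.intervalIntegral_apply (hcont.intervalIntegrable 0 1),
    intervalIntegral.integral_eq_sub_of_hasDerivAt
      (fun t _ => (hf.differentiable one_ne_zero _).hasFDerivAt.comp_hasDerivAt t (hγ t))
      ((hcont.clm_apply continuous_const).intervalIntegrable 0 1)]
  simp

end Hadamard

section Linearization

variable {ι κ α β : Type*} [Fintype ι] [DecidableEq ι] [Fintype κ] [DecidableEq κ]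
  [Fintype α] [Fintype β]

noncomputable def linearizedCoeff (A : α → β → (ι → κ → ℝ) → ℝ) (z w : ι → κ → ℝ)
    (H : α → β → ℝ) (m : ι) (j : κ) : ℝ :=
  ∑ a, ∑ b, hadamardCoeff (A a b) z w (Pi.single m (Pi.single j 1)) * H a b

theorem quasilinear_sub_eq_linearization {A : α → β → (ι → κ → ℝ) → ℝ}
    (hA : ∀ a b, ContDiff ℝ 1 (A a b)) (z w : ι → κ → ℝ) (Hz Hw : α → β → ℝ) :
    ∑ a, ∑ b, A a b z * (Hz a b - Hw a b)
      + ∑ m, ∑ j, linearizedCoeff A z w Hw m j * (z m j - w m j)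
      = ∑ a, ∑ b, A a b z * Hz a b - ∑ a, ∑ b, A a b w * Hw a b := by
  have hcoord : ∀ a b, ∑ m, ∑ j, hadamardCoeff (A a b) z w (Pi.single m (Pi.single j 1))
      * (z m j - w m j) = A a b z - A a b w := fun a b => by
    rw [sub_eq_hadamardCoeff_apply (hA a b), ← ContinuousLinearMap.coe_coe,
      LinearMap.apply_eq_sum_sum_single]
    simp [mul_comm]
  have hswap : ∑ m, ∑ j, linearizedCoeff A z w Hw m j * (z m j - w m j)
      = ∑ a, ∑ b, (A a b z - A a b w) * Hw a b := by
    simp only [← hcoord, linearizedCoeff, Finset.sum_mul, mul_right_comm _ (Hw _ _)]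
    exact (Finset.sum_congr rfl fun _ _ => Finset.sum_comm).trans <| Finset.sum_comm.trans <|
      Finset.sum_congr rfl fun _ _ =>
        (Finset.sum_congr rfl fun _ _ => Finset.sum_comm).trans Finset.sum_comm
  rw [hswap, ← Finset.sum_sub_distrib, ← Finset.sum_add_distrib]
  refine Finset.sum_congr rfl fun a _ => ?_
  rw [← Finset.sum_sub_distrib, ← Finset.sum_add_distrib]
  exact Finset.sum_congr rfl fun b _ => by ring

theorem ContDiffOn.linearizedCoeff {E : Type*} [NormedAddCommGroup E] [NormedSpace ℝ E]
    {n : ℕ∞} {s : Set E} {A : α → β → (ι → κ → ℝ) → ℝ} (hA : ∀ a b, ContDiff ℝ (n + 1) (A a b))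
    {z w : E → ι → κ → ℝ} {H : E → α → β → ℝ} (hz : ContDiffOn ℝ n z s)
    (hw : ContDiffOn ℝ n w s) (hH : ∀ a b, ContDiffOn ℝ n (fun x => H x a b) s) (m : ι) (j : κ) :
    ContDiffOn ℝ n (fun x => linearizedCoeff A (z x) (w x) (H x) m j) s :=
  ContDiffOn.sum fun a _ => ContDiffOn.sum fun b _ =>
    (((contDiff_hadamardCoeff (hA a b)).comp_contDiffOn (hz.prodMk hw)).clm_apply
      contDiffOn_const).mul (hH a b)

end Linearization

theorem ContDiff.div_sqrt_one_add_sum_sq {E κ : Type*} [NormedAddCommGroup E] [NormedSpace ℝ E]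
    [Fintype κ] {n : WithTop ℕ∞} {a : E → ℝ} {s : E → κ → ℝ} (ha : ContDiff ℝ n a)
    (hs : ContDiff ℝ n s) : ContDiff ℝ n fun z => a z / √(1 + ∑ i, s z i ^ 2) :=
  ha.div ((contDiff_const.add (ContDiff.sum fun i _ => (contDiff_pi.1 hs i).pow 2)).sqrt
    fun _ => by positivity) fun _ => by positivity

section PartialDerivatives

variable {k : ℕ} {U : Set (Fin k → ℝ)} {f g : (Fin k → ℝ) → ℝ} {x : Fin k → ℝ}

theorem pd_sub (hf : DifferentiableAt ℝ f x) (hg : DifferentiableAt ℝ g x) (i : Fin k) :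
    pd i (fun y => f y - g y) x = pd i f x - pd i g x := by
  simp [pd, fderiv_fun_sub hf hg]

theorem contDiffOn_pd {n : WithTop ℕ∞} (hU : IsOpen U) (hf : ContDiffOn ℝ (n + 1) f U)
    (i : Fin k) : ContDiffOn ℝ n (pd i f) U :=
  (hf.fderiv_of_isOpen hU le_rfl).clm_apply contDiffOn_const

theorem contDiffOn_grad {n : WithTop ℕ∞} (hU : IsOpen U) (hf : ContDiffOn ℝ (n + 1) f U) :
    ContDiffOn ℝ n (grad f) U :=
  contDiffOn_pi.2 (contDiffOn_pd hU hf)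

theorem contDiffOn_grad_pi {ι : Type*} [Fintype ι] {n : WithTop ℕ∞} {u : (Fin k → ℝ) → ι → ℝ}
    (hU : IsOpen U) (hu : ContDiffOn ℝ (n + 1) u U) :
    ContDiffOn ℝ n (fun x m => grad (fun y => u y m) x) U :=
  contDiffOn_pi.2 fun m => contDiffOn_grad hU (contDiffOn_pi.1 hu m)

theorem pd_sub_of_contDiffOn (hU : IsOpen U) (hf : ContDiffOn ℝ 1 f U)
    (hg : ContDiffOn ℝ 1 g U) (hx : x ∈ U) (i : Fin k) :
    pd i (fun y => f y - g y) x = pd i f x - pd i g x :=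
  pd_sub ((hf.differentiableOn one_ne_zero).differentiableAt (hU.mem_nhds hx))
    ((hg.differentiableOn one_ne_zero).differentiableAt (hU.mem_nhds hx)) i

theorem pd_pd_sub (hU : IsOpen U) (hf : ContDiffOn ℝ 2 f U) (hg : ContDiffOn ℝ 2 g U)
    (hx : x ∈ U) (i j : Fin k) :
    pd i (pd j fun y => f y - g y) x = pd i (pd j f) x - pd i (pd j g) x := by
  have heq : pd j (fun y => f y - g y) =ᶠ[nhds x] fun y => pd j f y - pd j g y :=
    Filter.eventually_of_mem (hU.mem_nhds hx) fun y hy =>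
      pd_sub_of_contDiffOn hU (hf.of_le one_le_two) (hg.of_le one_le_two) hy j
  rw [pd, heq.fderiv_eq]
  exact pd_sub_of_contDiffOn hU (contDiffOn_pd hU hf j) (contDiffOn_pd hU hg j) hx i

end PartialDerivatives

theorem difference_of_solutions_satisfies_linear_system_general
    (k p : ℕ) (U : Set (Fin k → ℝ)) (hU : IsOpen U)
    (a : Fin k → Fin k → (Fin p → (Fin k → ℝ)) → ℝ)
    (ha : ∀ i j, ContDiff ℝ (⊤ : ℕ∞) (a i j))
    (u v : (Fin k → ℝ) → Fin p → ℝ)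
    (hu : ContDiffOn ℝ (⊤ : ℕ∞) u U) (hv : ContDiffOn ℝ (⊤ : ℕ∞) v U)
    (hueq : ∀ l : Fin p, ∀ x ∈ U,
      ∑ i, ∑ j,
        a i j (fun m => grad (fun y => u y m) x) /
          Real.sqrt (1 + ∑ i', (pd i' (fun y => u y l) x) ^ 2) *
        pd i (pd j (fun y => u y l)) x = 0)
    (hveq : ∀ l : Fin p, ∀ x ∈ U,
      ∑ i, ∑ j,
        a i j (fun m => grad (fun y => v y m) x) /
          Real.sqrt (1 + ∑ i', (pd i' (fun y => v y l) x) ^ 2) *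
        pd i (pd j (fun y => v y l)) x = 0) :
    ∃ b : Fin k → Fin p → Fin p → (Fin k → ℝ) → ℝ,
      (∀ j m l, ContDiffOn ℝ (⊤ : ℕ∞) (b j m l) U) ∧
      ∀ l : Fin p, ∀ x ∈ U,
        ∑ i, ∑ j,
          a i j (fun m => grad (fun y => u y m) x) /
            Real.sqrt (1 + ∑ i', (pd i' (fun y => u y l) x) ^ 2) *
          pd i (pd j (fun y => u y l - v y l)) x
        + ∑ m, ∑ j, b j m l x * pd j (fun y => u y m - v y m) x = 0 := by
  let A : Fin p → Fin k → Fin k → (Fin p → Fin k → ℝ) → ℝ := fun l i j z =>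
    a i j z / √(1 + ∑ i', z l i' ^ 2)
  have hA : ∀ l i j, ContDiff ℝ (⊤ : ℕ∞) (A l i j) := fun l i j =>
    (ha i j).div_sqrt_one_add_sum_sq (contDiff_apply ℝ _ l)
  have hu2 : ∀ m, ContDiffOn ℝ 2 (fun y => u y m) U := fun m =>
    (contDiffOn_pi.1 hu m).of_le (WithTop.coe_le_coe.2 le_top)
  have hv2 : ∀ m, ContDiffOn ℝ 2 (fun y => v y m) U := fun m =>
    (contDiffOn_pi.1 hv m).of_le (WithTop.coe_le_coe.2 le_top)
  let Gu x m := grad (fun y => u y m) x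
  let Gv x m := grad (fun y => v y m) x
  let Hu l x i j := pd i (pd j fun y => u y l) x
  let Hv l x i j := pd i (pd j fun y => v y l) x
  refine ⟨fun j m l x => linearizedCoeff (A l) (Gu x) (Gv x) (Hv l x) m j, fun j m l => ?_,
    fun l x hx => ?_⟩
  · exact ContDiffOn.linearizedCoeff (hA l) (contDiffOn_grad_pi (n := (⊤ : ℕ∞)) hU hu)
      (contDiffOn_grad_pi (n := (⊤ : ℕ∞)) hU hv)
      (fun i j => contDiffOn_pd (n := (⊤ : ℕ∞)) hU (contDiffOn_pd hU (contDiffOn_pi.1 hv l) j) i)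
      m j
  have hsub : ∀ m j, pd j (fun y => u y m - v y m) x = Gu x m j - Gv x m j := fun m j =>
    pd_sub_of_contDiffOn hU ((hu2 m).of_le one_le_two) ((hv2 m).of_le one_le_two) hx j
  simp_rw [pd_pd_sub hU (hu2 l) (hv2 l) hx, hsub]
  have hueq' : ∑ i, ∑ j, A l i j (Gu x) * Hu l x i j = 0 := hueq l x hx
  have hveq' : ∑ i, ∑ j, A l i j (Gv x) * Hv l x i j = 0 := hveq l x hx
  have key := quasilinear_sub_eq_linearization (fun i j => (hA l i j).of_le (by simp))
    (Gu x) (Gv x) (Hu l x) (Hv l x)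
  rw [hueq', hveq', sub_zero] at key
  exact key

/-- If `u, v : U ⊆ ℝ^k → ℝ^p` both satisfy the quasilinear minimal-graph type system
`Σ_{ij} (a_{ij}(∇u₁,…,∇u_p)/√(1+|∇u_l|²)) D_{ij}u_l = 0`, then the difference `φ = u - v`
satisfies a linear system
`Σ_{ij} (a_{ij}(∇u)/√(1+|∇u_l|²)) D_{ij}φ_l + Σ_{m,j} b_j^{m,l} D_j φ_m = 0`
with smooth coefficients `b_j^{m,l}`. -/
theorem difference_of_solutions_satisfies_linear_system
    (k p : ℕ) (hp : 1 ≤ p) (U : Set (Fin k → ℝ)) (hU : IsOpen U)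
    (a : Fin k → Fin k → (Fin p → (Fin k → ℝ)) → ℝ)
    (ha : ∀ i j, ContDiff ℝ (⊤ : ℕ∞) (a i j))
    (u v : (Fin k → ℝ) → Fin p → ℝ)
    (hu : ContDiffOn ℝ (⊤ : ℕ∞) u U) (hv : ContDiffOn ℝ (⊤ : ℕ∞) v U)
    (hueq : ∀ l : Fin p, ∀ x ∈ U,
      ∑ i, ∑ j,
        a i j (fun m => grad (fun y => u y m) x) /
          Real.sqrt (1 + ∑ i', (pd i' (fun y => u y l) x) ^ 2) *
        pd i (pd j (fun y => u y l)) x = 0)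
    (hveq : ∀ l : Fin p, ∀ x ∈ U,
      ∑ i, ∑ j,
        a i j (fun m => grad (fun y => v y m) x) /
          Real.sqrt (1 + ∑ i', (pd i' (fun y => v y l) x) ^ 2) *
        pd i (pd j (fun y => v y l)) x = 0) :
    ∃ b : Fin k → Fin p → Fin p → (Fin k → ℝ) → ℝ,
      (∀ j m l, ContDiffOn ℝ (⊤ : ℕ∞) (b j m l) U) ∧
      ∀ l : Fin p, ∀ x ∈ U,
        ∑ i, ∑ j,
          a i j (fun m => grad (fun y => u y m) x) /
            Real.sqrt (1 + ∑ i', (pd i' (fun y => u y l) x) ^ 2) *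
          pd i (pd j (fun y => u y l - v y l)) x
        + ∑ m, ∑ j, b j m l x * pd j (fun y => u y m - v y m) x = 0 :=
  difference_of_solutions_satisfies_linear_system_general k p U hU a ha u v hu hv hueq hveq
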